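/- arXiv:2003.06391 — 2 statements merged into one kernel-verified Lean document; each statement's English description precedes it below -/
import Mathlib

section
/- Let V ∈ ℂ^{2n×n} satisfy V^H V = I_n and V^H F_{2n} V = 0, where F_{2n} is the 2n×2n flip matrix. Then U := [V, F_{2n} V F_n] ∈ ℂ^{2n×2n} is unitary and perplectic, i.e. U^H U = I_{2n} and U^H F_{2n} U = F_{2n}. -/
/-!
For Hermitian involutions `F`, `G` and `U = [V, F V G]`, one has `F U = U J` with
`J = [[0, G], [G, 0]]`, so perplecticity `Uᴴ F U = Uᴴ U J = J` follows from unitarity. Unitarity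
is a block computation: the off-diagonal blocks are `Vᴴ F V = 0` up to a factor `G`, and the lower
diagonal block is `G Vᴴ F F V G = G G = 1`. For `F = F_{2n}`, `G = F_n` the matrix `J` is `F_{2n}`.
-/

open Matrix

noncomputable def flipMat (m : ℕ) : Matrix (Fin m) (Fin m) ℂ :=
  Matrix.of fun i j => if (i : ℕ) + (j : ℕ) = m - 1 then 1 else 0

/-- The flip matrix on a `2n`-dimensional space indexed by `Fin n ⊕ Fin n`:
`F_{2n} = [[0, F_n], [F_n, 0]]`. -/
noncomputable def flip2 (n : ℕ) : Matrix (Fin n ⊕ Fin n) (Fin n ⊕ Fin n) ℂ :=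
  Matrix.fromBlocks 0 (flipMat n) (flipMat n) 0

section HermitianInvolution

variable {m k R : Type*} [Fintype m] [DecidableEq m] [Fintype k] [DecidableEq k]
  [Semiring R] {F : Matrix m m R} {G : Matrix k k R} {V : Matrix m k R}

theorem mul_fromCols_eq_fromCols_mul_fromBlocks (hFF : F * F = 1) (hGG : G * G = 1) :
    F * fromCols V (F * V * G) = fromCols V (F * V * G) * fromBlocks 0 G G 0 := by
  rw [mul_fromCols, fromCols_mul_fromBlocks]
  congr 1
  · simp [Matrix.mul_assoc, hGG]
  · simp [← Matrix.mul_assoc, hFF]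

theorem conjTranspose_fromCols_mul_fromCols_eq_one [StarRing R] (hF : Fᴴ = F) (hFF : F * F = 1)
    (hG : Gᴴ = G) (hGG : G * G = 1) (hV : Vᴴ * V = 1) (hVF : Vᴴ * F * V = 0) :
    (fromCols V (F * V * G))ᴴ * fromCols V (F * V * G) = 1 := by
  have hW : (F * V * G)ᴴ = G * Vᴴ * F := by
    simp only [conjTranspose_mul, hF, hG, Matrix.mul_assoc]
  have hVW : Vᴴ * (F * V * G) = 0 := by
    rw [← Matrix.mul_assoc, ← Matrix.mul_assoc, hVF, Matrix.zero_mul]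
  have hWV : G * Vᴴ * F * V = 0 := by
    rw [Matrix.mul_assoc, Matrix.mul_assoc, ← Matrix.mul_assoc Vᴴ, hVF, Matrix.mul_zero]
  have hWW : G * Vᴴ * F * (F * V * G) = 1 := calc
    G * Vᴴ * F * (F * V * G) = G * (Vᴴ * (F * F * V)) * G := by simp only [Matrix.mul_assoc]
    _ = 1 := by rw [hFF, Matrix.one_mul, hV, Matrix.mul_one, hGG]
  rw [conjTranspose_fromCols_eq_fromRows_conjTranspose, fromRows_mul_fromCols, hW, hV, hVW, hWV,
    hWW, fromBlocks_one]

theorem conjTranspose_fromCols_mul_mul_fromCols_eq_fromBlocks [StarRing R] (hF : Fᴴ = F)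
    (hFF : F * F = 1) (hG : Gᴴ = G) (hGG : G * G = 1) (hV : Vᴴ * V = 1) (hVF : Vᴴ * F * V = 0) :
    (fromCols V (F * V * G))ᴴ * F * fromCols V (F * V * G) = fromBlocks 0 G G 0 := by
  rw [Matrix.mul_assoc, mul_fromCols_eq_fromCols_mul_fromBlocks hFF hGG, ← Matrix.mul_assoc,
    conjTranspose_fromCols_mul_fromCols_eq_one hF hFF hG hGG hV hVF, Matrix.one_mul]

end HermitianInvolution

theorem flipMat_eq_permMatrix (n : ℕ) : flipMat n = Fin.revPerm.permMatrix ℂ := by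
  ext i j
  have := i.isLt
  simp only [flipMat, of_apply, PEquiv.toMatrix_apply, Equiv.toPEquiv_apply, Option.mem_def,
    Option.some.injEq, Fin.revPerm_apply, Fin.ext_iff, Fin.val_rev]
  exact if_congr (by omega) rfl rfl

theorem flipMat_mul_flipMat (n : ℕ) : flipMat n * flipMat n = 1 := by
  have hrev : Fin.revPerm * Fin.revPerm = (1 : Equiv.Perm (Fin n)) := Equiv.ext Fin.rev_rev
  rw [flipMat_eq_permMatrix, ← permMatrix_mul, hrev, permMatrix_one]

theorem flipMat_conjTranspose (n : ℕ) : (flipMat n)ᴴ = flipMat n := by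
  rw [flipMat_eq_permMatrix, conjTranspose_permMatrix, Equiv.Perm.inv_def, Fin.revPerm_symm]

theorem flip2_conjTranspose (n : ℕ) : (flip2 n)ᴴ = flip2 n := by
  simp [flip2, fromBlocks_conjTranspose, flipMat_conjTranspose]

theorem flip2_mul_flip2 (n : ℕ) : flip2 n * flip2 n = 1 := by
  simp [flip2, fromBlocks_multiply, flipMat_mul_flipMat, ← fromBlocks_one]

theorem stmt10 (n : ℕ) (V : Matrix (Fin n ⊕ Fin n) (Fin n) ℂ)
    (hV : Vᴴ * V = 1) (hVF : Vᴴ * flip2 n * V = 0) :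
    (Matrix.fromCols V (flip2 n * V * flipMat n))ᴴ *
        Matrix.fromCols V (flip2 n * V * flipMat n) = 1 ∧
    (Matrix.fromCols V (flip2 n * V * flipMat n))ᴴ * flip2 n *
        Matrix.fromCols V (flip2 n * V * flipMat n) = flip2 n :=
  ⟨conjTranspose_fromCols_mul_fromCols_eq_one (flip2_conjTranspose n) (flip2_mul_flip2 n)
      (flipMat_conjTranspose n) (flipMat_mul_flipMat n) hV hVF,
    conjTranspose_fromCols_mul_mul_fromCols_eq_fromBlocks (flip2_conjTranspose n)
      (flip2_mul_flip2 n) (flipMat_conjTranspose n) (flipMat_mul_flipMat n) hV hVF⟩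
end

section
/- Let A ∈ ℂ^{2n×2n} be Hamiltonian and let X₀ = Z D₀ Z^H with Z unitary symplectic and D₀ = diag(Z^H A Z) be a closest normal Hamiltonian matrix to A in the Frobenius norm (among normal Hamiltonian matrices admitting such a decomposition). Then for every unitary symplectic Q, ‖diag(Q^H A Q)‖_F ≤ ‖diag(Z^H A Z)‖_F. -/
/-!
Conjugating by a unitary `Q` and splitting off the diagonal gives
`‖A - Q diag(Qᴴ A Q) Qᴴ‖² = ‖Qᴴ A Q - diag(Qᴴ A Q)‖²`, which is `‖A‖² - ‖diag(Qᴴ A Q)‖²`,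
so minimising the distance to `A` over unitary symplectic `Q` is the same as maximising
`‖diag(Qᴴ A Q)‖`.
-/

open Matrix

noncomputable def Jmat (n : ℕ) : Matrix (Fin n ⊕ Fin n) (Fin n ⊕ Fin n) ℂ :=
  Matrix.fromBlocks 0 1 (-1) 0

noncomputable def frob {m : Type*} [Fintype m] (M : Matrix m m ℂ) : ℝ :=
  Real.sqrt (∑ i, ∑ j, ‖M i j‖ ^ 2)

noncomputable def diagPart {m : Type*} [Fintype m] [DecidableEq m] (M : Matrix m m ℂ) :
    Matrix m m ℂ :=
  Matrix.diagonal (fun i => M i i)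

section Frobenius

variable {m : Type*} [Fintype m]

lemma frob_nonneg (M : Matrix m m ℂ) : 0 ≤ frob M :=
  Real.sqrt_nonneg _

lemma frob_sq (M : Matrix m m ℂ) : frob M ^ 2 = ∑ i, ∑ j, ‖M i j‖ ^ 2 :=
  Real.sq_sqrt (by positivity)

lemma frob_eq_sqrt_re_trace (M : Matrix m m ℂ) : frob M = Real.sqrt (trace (Mᴴ * M)).re := by
  simp only [frob, trace, diag, mul_apply, conjTranspose_apply, Complex.re_sum]
  rw [Finset.sum_comm]
  congr 1
  refine Finset.sum_congr rfl fun i _ => Finset.sum_congr rfl fun j _ => ?_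
  simp [Complex.sq_norm, Complex.normSq_apply, Complex.mul_re]

variable [DecidableEq m]

lemma frob_conj_unitary (U M : Matrix m m ℂ) (hU : Uᴴ * U = 1) :
    frob (Uᴴ * M * U) = frob M := by
  have hU' : U * Uᴴ = 1 := mul_eq_one_comm.mp hU
  have hgram : (Uᴴ * M * U)ᴴ * (Uᴴ * M * U) = Uᴴ * (Mᴴ * M) * U := by
    simp only [conjTranspose_mul, conjTranspose_conjTranspose, Matrix.mul_assoc]
    rw [← Matrix.mul_assoc U Uᴴ, hU', Matrix.one_mul]
  rw [frob_eq_sqrt_re_trace, frob_eq_sqrt_re_trace, hgram, trace_mul_cycle,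
    ← Matrix.mul_assoc, hU', Matrix.one_mul]

lemma frob_sq_eq_diagPart_add (M : Matrix m m ℂ) :
    frob M ^ 2 = frob (diagPart M) ^ 2 + frob (M - diagPart M) ^ 2 := by
  simp only [frob_sq, diagPart, ← Finset.sum_add_distrib]
  refine Finset.sum_congr rfl fun i _ => Finset.sum_congr rfl fun j _ => ?_
  by_cases h : i = j
  · subst h; simp
  · simp [diagonal_apply_ne _ h]

lemma frob_sq_sub_conj_diagPart (A Q : Matrix m m ℂ) (hQ : Qᴴ * Q = 1) :
    frob (A - Q * diagPart (Qᴴ * A * Q) * Qᴴ) ^ 2 =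
      frob A ^ 2 - frob (diagPart (Qᴴ * A * Q)) ^ 2 := by
  have hconj : Qᴴ * (A - Q * diagPart (Qᴴ * A * Q) * Qᴴ) * Q
      = Qᴴ * A * Q - diagPart (Qᴴ * A * Q) := by
    simp only [Matrix.mul_sub, Matrix.sub_mul, Matrix.mul_assoc]
    simp only [← Matrix.mul_assoc Qᴴ Q, hQ, Matrix.one_mul, Matrix.mul_one]
  rw [← frob_conj_unitary Q _ hQ, hconj, ← frob_conj_unitary Q A hQ,
    frob_sq_eq_diagPart_add (Qᴴ * A * Q)]
  ring

end Frobenius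

theorem stmt15_general (n : ℕ) (A Z : Matrix (Fin n ⊕ Fin n) (Fin n ⊕ Fin n) ℂ)
    (hZunit : Zᴴ * Z = 1)
    (hmin : ∀ Q : Matrix (Fin n ⊕ Fin n) (Fin n ⊕ Fin n) ℂ,
      Qᴴ * Q = 1 → Qᴴ * Jmat n * Q = Jmat n →
      frob (A - Z * diagPart (Zᴴ * A * Z) * Zᴴ) ≤ frob (A - Q * diagPart (Qᴴ * A * Q) * Qᴴ)) :
    ∀ Q : Matrix (Fin n ⊕ Fin n) (Fin n ⊕ Fin n) ℂ,
      Qᴴ * Q = 1 → Qᴴ * Jmat n * Q = Jmat n →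
      frob (diagPart (Qᴴ * A * Q)) ≤ frob (diagPart (Zᴴ * A * Z)) := by
  intro Q hQunit hQsymp
  have h := hmin Q hQunit hQsymp
  rw [← sq_le_sq₀ (frob_nonneg _) (frob_nonneg _), frob_sq_sub_conj_diagPart A Z hZunit,
    frob_sq_sub_conj_diagPart A Q hQunit] at h
  rw [← sq_le_sq₀ (frob_nonneg _) (frob_nonneg _)]
  linarith

theorem stmt15 (n : ℕ) (A Z : Matrix (Fin n ⊕ Fin n) (Fin n ⊕ Fin n) ℂ)
    (hA : (Jmat n * A)ᴴ = Jmat n * A)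
    (hZunit : Zᴴ * Z = 1) (hZsymp : Zᴴ * Jmat n * Z = Jmat n)
    (hmin : ∀ Q : Matrix (Fin n ⊕ Fin n) (Fin n ⊕ Fin n) ℂ,
      Qᴴ * Q = 1 → Qᴴ * Jmat n * Q = Jmat n →
      frob (A - Z * diagPart (Zᴴ * A * Z) * Zᴴ) ≤ frob (A - Q * diagPart (Qᴴ * A * Q) * Qᴴ)) :
    ∀ Q : Matrix (Fin n ⊕ Fin n) (Fin n ⊕ Fin n) ℂ,
      Qᴴ * Q = 1 → Qᴴ * Jmat n * Q = Jmat n →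
      frob (diagPart (Qᴴ * A * Q)) ≤ frob (diagPart (Zᴴ * A * Z)) :=
  stmt15_general n A Z hZunit hmin
end
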